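/- Let d ≥ 3 and let f(x,y) = ℓ_0(x,y)^{d−2} ℓ_1(x,y) ℓ_2(x,y), where ℓ_0, ℓ_1, ℓ_2 are pairwise nonproportional linear forms over ℂ. Then L_ℂ(f) = d − 1. -/

import Mathlib

/-!
Write `ℓᵢ = lform (a i) (b i)` and `f = ℓ₀^(d-2) ℓ₁ ℓ₂`.

Upper bound: for a primitive `d`-th root of unity `ζ`, summing `(ζʲ x + y)^d` against the weights
`ζ^(j(d-1)) - ζ^(j(d-2))` picks out the two monomials `x y^(d-1)` and `x² y^(d-2)`, giving
`d x y^(d-2) (d y - (d choose 2) x)`. The weight of `j = 0` vanishes, so this is a sum of `d - 1`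
powers, and a linear change of variables (Cramer's rule for `ℓ₂` in terms of `ℓ₀, ℓ₁`) turns it into
a multiple of `f`.

Lower bound: a shortest decomposition `f = ∑ λⱼ Lⱼ^d` uses pairwise non-proportional `Lⱼ`, since
proportional terms merge. Let `δ` be the derivative along the zero `v` of `ℓ₀`. As `f` is `ℓ₀^(d-2)`
times a quadratic form, `δ³ f = 0` while `δ f ≠ 0`. On the decomposition, `δ³` produces a nonzero
constant times `∑ λⱼ Lⱼ(v)³ Lⱼ^(d-3)`; at most `d - 2` pairwise non-proportional `(d-3)`-th powers
are linearly independent (apply the derivative killing one of them and induct), so `λⱼ Lⱼ(v) = 0`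
for every `j`, and then `δ f = d ∑ λⱼ Lⱼ(v) Lⱼ^(d-1) = 0`, a contradiction.
-/

open MvPolynomial Finset

/-- The linear form `a*x + b*y` as a binary polynomial over `ℂ`. -/
noncomputable def lform (a b : ℂ) : MvPolynomial (Fin 2) ℂ := C a * X 0 + C b * X 1

/-- The `K`-rank of a binary form `p`: the least `r` such that `p` is a `K`-linear
combination of `r` d-th powers of linear forms with coefficients in `K`. -/
noncomputable def rankIn (K : Subfield ℂ) (d : ℕ) (p : MvPolynomial (Fin 2) ℂ) : ℕ :=
  sInf {r : ℕ | ∃ lam a b : Fin r → ℂ, (∀ j, lam j ∈ K ∧ a j ∈ K ∧ b j ∈ K) ∧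
    p = ∑ j, C (lam j) * lform (a j) (b j) ^ d}

/-- The Waring rank `L_ℂ` of a binary form. -/
noncomputable def rankC (d : ℕ) (p : MvPolynomial (Fin 2) ℂ) : ℕ :=
  sInf {r : ℕ | ∃ lam a b : Fin r → ℂ, p = ∑ j, C (lam j) * lform (a j) (b j) ^ d}

/-- Single partial derivative as a plain function. -/
noncomputable def pd (i : Fin 2) (p : MvPolynomial (Fin 2) ℂ) : MvPolynomial (Fin 2) ℂ :=
  pderiv i p

/-- `apolar h p = h(D) p`, the differential operator of `h` applied to `p`. -/
noncomputable def apolar (h p : MvPolynomial (Fin 2) ℂ) : MvPolynomial (Fin 2) ℂ :=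
  ∑ m ∈ h.support, h.coeff m • ((pd 0)^[m 0] ((pd 1)^[m 1] p))

/-- The subfield of `ℂ` generated by a subfield `K` and a set `S`. -/
noncomputable def adj (K : Subfield ℂ) (S : Set ℂ) : Subfield ℂ := Subfield.closure (↑K ∪ S)

/-- `z` and `w` are conjugate over `K` in `K(s)`: `z = a + b s`, `w = a - b s` with `a, b ∈ K`. -/
def conjPair (K : Subfield ℂ) (s z w : ℂ) : Prop :=
  ∃ a b : ℂ, a ∈ K ∧ b ∈ K ∧ z = a + b * s ∧ w = a - b * s

noncomputable def lformR (a b : ℝ) : MvPolynomial (Fin 2) ℝ := C a * X 0 + C b * X 1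

noncomputable def rankR (d : ℕ) (p : MvPolynomial (Fin 2) ℝ) : ℕ :=
  sInf {r : ℕ | ∃ lam a b : Fin r → ℝ, p = ∑ j, C (lam j) * lformR (a j) (b j) ^ d}

theorem IsPrimitiveRoot.sum_range_pow_pow {R : Type*} [CommRing R] [IsDomain R] {ζ : R} {d : ℕ}
    (hζ : IsPrimitiveRoot ζ d) (a : ℕ) :
    ∑ j ∈ range d, (ζ ^ j) ^ a = if d ∣ a then (d : R) else 0 := by
  simp_rw [← pow_mul, mul_comm _ a, pow_mul]
  split_ifs with h
  · simp [(hζ.pow_eq_one_iff_dvd a).2 h]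
  · have hne : ζ ^ a - 1 ≠ 0 := sub_ne_zero.2 fun h' => h ((hζ.pow_eq_one_iff_dvd a).1 h')
    refine (mul_eq_zero.1 ?_).resolve_left hne
    rw [mul_geom_sum, ← pow_mul, mul_comm, pow_mul, hζ.pow_eq_one, one_pow, sub_self]

theorem Nat.dvd_sub_add_iff {d i k : ℕ} (hi : 0 < i) (hid : i < d) (hk : k ≤ d) :
    d ∣ d - i + k ↔ k = i := by
  constructor
  · rintro ⟨_ | _ | c, hc⟩
    · omega
    · omega
    · have : d * (c + 1 + 1) = d * c + 2 * d := by ring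
      omega
  · rintro rfl; exact ⟨1, by omega⟩

theorem IsPrimitiveRoot.sum_mul_add_pow {R : Type*} [CommRing R] [IsDomain R] {ζ : R} {d : ℕ}
    (hζ : IsPrimitiveRoot ζ d) (hd : 3 ≤ d) (x y : R) :
    ∑ j ∈ range d, ((ζ ^ j) ^ (d - 1) - (ζ ^ j) ^ (d - 2)) * (ζ ^ j * x + y) ^ d =
      d * x * y ^ (d - 2) * (d * y - d.choose 2 * x) := by
  have hmoment : ∀ k ∈ range (d + 1),
      ∑ j ∈ range d, ((ζ ^ j) ^ (d - 1) - (ζ ^ j) ^ (d - 2)) * (ζ ^ j) ^ k =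
        (if k = 1 then (d : R) else 0) - if k = 2 then (d : R) else 0 := by
    intro k hk
    have hk : k ≤ d := Nat.lt_succ_iff.1 (mem_range.1 hk)
    simp_rw [sub_mul, ← pow_add, sum_sub_distrib, hζ.sum_range_pow_pow,
      Nat.dvd_sub_add_iff one_pos (by omega) hk, Nat.dvd_sub_add_iff two_pos (by omega) hk]
  have hexpand : ∀ j, (ζ ^ j * x + y) ^ d =
      ∑ k ∈ range (d + 1), (ζ ^ j) ^ k * (x ^ k * y ^ (d - k) * d.choose k) := by
    intro j; rw [add_pow]; simp_rw [mul_pow, mul_assoc]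
  simp_rw [hexpand, mul_sum, ← mul_assoc]
  rw [sum_comm]
  simp_rw [← sum_mul]
  rw [sum_congr rfl fun k hk => by rw [hmoment k hk]]
  simp only [sub_mul, sum_sub_distrib, ite_mul, zero_mul, sum_ite_eq', mem_range]
  rw [if_pos (by omega), if_pos (by omega)]
  obtain ⟨e, rfl⟩ : ∃ e, d = e + 2 := ⟨d - 2, by omega⟩
  simp only [Nat.add_sub_cancel, Nat.choose_one_right, show e + 2 - 1 = e + 1 by omega]
  push_cast
  ring

theorem eval_lform (v : Fin 2 → ℂ) (a b : ℂ) : eval v (lform a b) = a * v 0 + b * v 1 := by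
  simp [lform]

theorem C_mul_lform (c a b : ℂ) : C c * lform a b = lform (c * a) (c * b) := by
  simp only [lform, map_mul]; ring

theorem lform_add (a b a' b' : ℂ) : lform a b + lform a' b' = lform (a + a') (b + b') := by
  simp only [lform, map_add]; ring

theorem lform_sub (a b a' b' : ℂ) : lform a b - lform a' b' = lform (a - a') (b - b') := by
  simp only [lform, map_sub]; ring

theorem rankC_le_card {ι : Type*} {d : ℕ} {f : MvPolynomial (Fin 2) ℂ} (s : Finset ι)
    (lam a b : ι → ℂ) (hf : f = ∑ j ∈ s, C (lam j) * lform (a j) (b j) ^ d) : rankC d f ≤ #s := by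
  let e : Fin #s ≃ s := s.equivFin.symm
  refine Nat.sInf_le ⟨fun j => lam (e j), fun j => a (e j), fun j => b (e j), ?_⟩
  rw [hf, ← s.sum_coe_sort]
  exact (e.sum_comp fun j : s => C (lam j) * lform (a j) (b j) ^ d).symm

theorem exists_eq_mul_or_eq_mul_of_mul_sub_mul_eq_zero {K : Type*} [Field K] {a b a' b' : K}
    (h : a * b' - a' * b = 0) :
    (∃ c, a = c * a' ∧ b = c * b') ∨ ∃ c, a' = c * a ∧ b' = c * b := by
  by_cases ha' : a' = 0
  · subst ha'
    by_cases hb' : b' = 0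
    · exact Or.inr ⟨0, by simp [hb']⟩
    · refine Or.inl ⟨b / b', ?_, by field_simp⟩
      simpa [hb'] using h
  · exact Or.inl ⟨a / a', by field_simp, by field_simp; linear_combination -h⟩

theorem rankC_lt_card_of_eq_mul {ι : Type*} [DecidableEq ι] {d : ℕ}
    {f : MvPolynomial (Fin 2) ℂ} {s : Finset ι} {lam a b : ι → ℂ}
    (hf : f = ∑ k ∈ s, C (lam k) * lform (a k) (b k) ^ d) {i j : ι} (hi : i ∈ s) (hj : j ∈ s)
    (hij : i ≠ j) {c : ℂ} (ha : a i = c * a j) (hb : b i = c * b j) : rankC d f < #s := by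
  have hmerge : f = ∑ k ∈ s.erase i,
      C (lam k + (Pi.single j (lam i * c ^ d) : ι → ℂ) k) * lform (a k) (b k) ^ d := by
    have hi' : lform (a i) (b i) = C c * lform (a j) (b j) := by rw [C_mul_lform, ha, hb]
    have hsingle : ∑ k ∈ s.erase i, C ((Pi.single j (lam i * c ^ d) : ι → ℂ) k) *
        lform (a k) (b k) ^ d = C (lam i) * lform (a i) (b i) ^ d := by
      rw [sum_eq_single_of_mem j (mem_erase.2 ⟨hij.symm, hj⟩) fun k _ hk => by simp [hk],
        Pi.single_eq_same, hi', mul_pow, ← map_pow, map_mul, mul_assoc]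
    simp_rw [map_add, add_mul, sum_add_distrib, hsingle, add_comm _ (C (lam i) * _)]
    rw [add_sum_erase s (fun k => C (lam k) * lform (a k) (b k) ^ d) hi, hf]
  calc rankC d f ≤ #(s.erase i) := rankC_le_card _ _ _ _ hmerge
    _ < #s := card_erase_lt_of_mem hi

theorem exists_rankC_sum_pairwise {d r : ℕ} {f : MvPolynomial (Fin 2) ℂ}
    (h : ∃ lam a b : Fin r → ℂ, f = ∑ j, C (lam j) * lform (a j) (b j) ^ d) :
    ∃ lam a b : Fin (rankC d f) → ℂ, f = ∑ j, C (lam j) * lform (a j) (b j) ^ d ∧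
      Pairwise fun i j => a i * b j - a j * b i ≠ 0 := by
  obtain ⟨lam, a, b, hf⟩ := Nat.sInf_mem (⟨r, h⟩ : {r : ℕ | ∃ lam a b : Fin r → ℂ,
    f = ∑ j, C (lam j) * lform (a j) (b j) ^ d}.Nonempty)
  refine ⟨lam, a, b, hf, fun i j hij hcross => ?_⟩
  rcases exists_eq_mul_or_eq_mul_of_mul_sub_mul_eq_zero hcross with ⟨c, ha, hb⟩ | ⟨c, ha, hb⟩
  · simpa [rankC] using rankC_lt_card_of_eq_mul hf (mem_univ i) (mem_univ j) hij ha hb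
  · simpa [rankC] using rankC_lt_card_of_eq_mul hf (mem_univ j) (mem_univ i) hij.symm ha hb

theorem Derivation.map_pow_mul_of_map_eq_zero {R A : Type*} [CommRing R] [CommRing A]
    [Algebra R A] (D : Derivation R A A) {u : A} (hu : D u = 0) (n : ℕ) (g : A) :
    D (u ^ n * g) = u ^ n * D g := by
  simp [Derivation.leibniz, Derivation.leibniz_pow, hu]

noncomputable def dirDeriv (p q : ℂ) :
    Derivation ℂ (MvPolynomial (Fin 2) ℂ) (MvPolynomial (Fin 2) ℂ) :=
  p • pderiv 0 + q • pderiv 1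

theorem dirDeriv_lform (p q a b : ℂ) : dirDeriv p q (lform a b) = C (a * p + b * q) := by
  simp [dirDeriv, lform, pderiv_X, smul_eq_C_mul]
  ring

theorem dirDeriv_C (p q c : ℂ) : dirDeriv p q (C c) = 0 :=
  (dirDeriv p q).map_algebraMap c

theorem dirDeriv_lform_self (a b : ℂ) : dirDeriv b (-a) (lform a b) = 0 := by
  rw [dirDeriv_lform, mul_neg, mul_comm, add_neg_cancel, map_zero]

theorem dirDeriv_C_mul (p q c : ℂ) (g : MvPolynomial (Fin 2) ℂ) :
    dirDeriv p q (C c * g) = C c * dirDeriv p q g := by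
  rw [C_mul', Derivation.map_smul, C_mul']

theorem dirDeriv_lform_pow (p q a b : ℂ) (n : ℕ) :
    dirDeriv p q (lform a b ^ (n + 1)) = C ((n + 1) * (a * p + b * q)) * lform a b ^ n := by
  rw [Derivation.leibniz_pow, dirDeriv_lform, Nat.add_sub_cancel, nsmul_eq_mul, smul_eq_mul]
  simp only [map_mul, map_add, map_natCast, map_one]
  push_cast
  ring

theorem pow_dirDeriv_lform_pow (p q a b : ℂ) (n k : ℕ) :
    ((dirDeriv p q : Module.End ℂ (MvPolynomial (Fin 2) ℂ)) ^ k) (lform a b ^ (n + k)) =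
      C ((n + k).descFactorial k * (a * p + b * q) ^ k) * lform a b ^ n := by
  induction k with
  | zero => simp
  | succ k ih =>
    rw [pow_succ, Module.End.mul_apply, ← add_assoc, Derivation.coeFn_coe, dirDeriv_lform_pow,
      C_mul', map_smul, ih, smul_eq_C_mul, ← mul_assoc, ← map_mul, Nat.succ_descFactorial_succ]
    push_cast
    ring_nf

theorem pow_dirDeriv_sum {ι : Type*} (s : Finset ι) (lam a b : ι → ℂ) (p q : ℂ) (n k : ℕ) :
    ((dirDeriv p q : Module.End ℂ (MvPolynomial (Fin 2) ℂ)) ^ k)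
        (∑ j ∈ s, C (lam j) * lform (a j) (b j) ^ (n + k)) =
      ∑ j ∈ s, C (lam j * ((n + k).descFactorial k * (a j * p + b j * q) ^ k)) *
        lform (a j) (b j) ^ n := by
  simp_rw [map_sum, C_mul', map_smul, pow_dirDeriv_lform_pow, smul_eq_C_mul, ← mul_assoc,
    ← map_mul, mul_assoc]

theorem eq_zero_of_sum_C_mul_lform_pow_eq_zero {ι : Type*} [DecidableEq ι] {n : ℕ}
    {s : Finset ι} {μ a b : ι → ℂ} (hcard : #s ≤ n + 1)
    (hne : ∀ i ∈ s, lform (a i) (b i) ≠ 0)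
    (hpair : (s : Set ι).Pairwise fun i j => a i * b j - a j * b i ≠ 0)
    (h : ∑ i ∈ s, C (μ i) * lform (a i) (b i) ^ n = 0) : ∀ i ∈ s, μ i = 0 := by
  induction n generalizing s μ with
  | zero =>
    intro i hi
    obtain rfl : s = {i} :=
      eq_singleton_iff_unique_mem.2 ⟨hi, fun j hj => card_le_one.1 hcard j hj i hi⟩
    simpa using h
  | succ n ih =>
    intro i hi
    have hrest : ∀ j ∈ s.erase i, μ j = 0 := by
      have hD := congrArg ⇑((dirDeriv (b i) (-a i) : Module.End ℂ (MvPolynomial (Fin 2) ℂ)) ^ 1) h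
      rw [pow_dirDeriv_sum, map_zero, ← sum_erase _ (by ring_nf; simp)] at hD
      intro j hj
      have hμ := ih (by rw [card_erase_of_mem hi]; omega)
        (fun k hk => hne k (mem_of_mem_erase hk))
        (hpair.mono fun k hk => mem_of_mem_erase hk) hD j hj
      have hji : a j * b i - a i * b j ≠ 0 := hpair (mem_of_mem_erase hj) hi (ne_of_mem_erase hj)
      simp only [pow_one, Nat.descFactorial_one] at hμ
      refine (mul_eq_zero.1 hμ).resolve_right (mul_ne_zero (by norm_cast) ?_)
      rwa [mul_neg, ← sub_eq_add_neg, mul_comm (b j)]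
    rw [← add_sum_erase s _ hi, sum_eq_zero fun j hj => by rw [hrest j hj, map_zero, zero_mul],
      add_zero] at h
    simpa [hne i hi] using h

theorem exists_smul_lform_mul_pow_eq_sum {d : ℕ} (hd : 3 ≤ d) (c p q p' q' : ℂ) :
    ∃ lam a b : Fin (d - 1) → ℂ,
      c • (d * lform p q * lform p' q' ^ (d - 2) * (d * lform p' q' - d.choose 2 * lform p q)) =
        ∑ j, C (lam j) * lform (a j) (b j) ^ d := by
  obtain ⟨ζ, hζ⟩ : ∃ ζ : ℂ, IsPrimitiveRoot ζ d := ⟨_, Complex.isPrimitiveRoot_exp d (by omega)⟩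
  have hζC : IsPrimitiveRoot (C ζ : MvPolynomial (Fin 2) ℂ) d :=
    hζ.map_of_injective (C_injective _ _)
  set lam : ℕ → ℂ := fun j => c * ((ζ ^ j) ^ (d - 1) - (ζ ^ j) ^ (d - 2))
  have hterm : ∀ j, C c * (((C ζ ^ j) ^ (d - 1) - (C ζ ^ j) ^ (d - 2)) *
      (C ζ ^ j * lform p q + lform p' q') ^ d) =
      C (lam j) * lform (ζ ^ j * p + p') (ζ ^ j * q + q') ^ d := by
    intro j
    rw [← map_pow, C_mul_lform, lform_add, ← map_pow, ← map_pow, ← map_sub, ← mul_assoc, ← map_mul]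
  refine ⟨fun j => lam (j + 1), fun j => ζ ^ (j + 1 : ℕ) * p + p',
    fun j => ζ ^ (j + 1 : ℕ) * q + q', ?_⟩
  rw [← C_mul', ← hζC.sum_mul_add_pow hd, mul_sum, sum_congr rfl fun j _ => hterm j,
    Fin.sum_univ_eq_sum_range
      (fun j => C (lam (j + 1)) * lform (ζ ^ (j + 1) * p + p') (ζ ^ (j + 1) * q + q') ^ d),
    ← Nat.sub_add_cancel (show 1 ≤ d by omega), sum_range_succ']
  simp [lam]

theorem exists_near_power_eq_sum {d : ℕ} (hd : 3 ≤ d) {a b : Fin 3 → ℂ}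
    (hdist : ∀ i j, i ≠ j → a i * b j - a j * b i ≠ 0) :
    ∃ lam α β : Fin (d - 1) → ℂ,
      lform (a 0) (b 0) ^ (d - 2) * lform (a 1) (b 1) * lform (a 2) (b 2) =
        ∑ j, C (lam j) * lform (α j) (β j) ^ d := by
  have hd0 : (d : ℂ) ≠ 0 := by norm_cast; omega
  have hC2 : (d.choose 2 : ℂ) ≠ 0 := by norm_cast; exact (Nat.choose_pos (by omega)).ne'
  have h01 := hdist 0 1 (by decide)
  have h21 := hdist 2 1 (by decide)
  have h02 := hdist 0 2 (by decide)
  set s := (a 2 * b 1 - a 1 * b 2) / d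
  set t := -(a 0 * b 2 - a 2 * b 0) / d.choose 2
  set k := d * t * s ^ (d - 2) * (a 0 * b 1 - a 1 * b 0)
  have hk : k ≠ 0 := by simp only [k, s, t]; simp [*]
  -- Cramer's rule: `Δ₀₁ ℓ₂ = Δ₂₁ ℓ₀ + Δ₀₂ ℓ₁`, with `Δᵢⱼ = aᵢ bⱼ - aⱼ bᵢ`
  have hlin : (d : MvPolynomial (Fin 2) ℂ) * lform (s * a 0) (s * b 0) -
      (d.choose 2 : MvPolynomial (Fin 2) ℂ) * lform (t * a 1) (t * b 1) =
        C (a 0 * b 1 - a 1 * b 0) * lform (a 2) (b 2) := by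
    rw [← map_natCast C, ← map_natCast C, C_mul_lform, C_mul_lform, C_mul_lform, lform_sub]
    congr 1 <;> simp only [s, t] <;> field_simp <;> ring
  obtain ⟨lam, α, β, hrep⟩ := exists_smul_lform_mul_pow_eq_sum hd k⁻¹ (t * a 1) (t * b 1)
    (s * a 0) (s * b 0)
  refine ⟨lam, α, β, ?_⟩
  rw [← hrep, hlin, ← C_mul_lform, ← C_mul_lform, ← map_natCast C, ← C_mul']
  calc _ = C (k⁻¹ * k) * (lform (a 0) (b 0) ^ (d - 2) * lform (a 1) (b 1) * lform (a 2) (b 2)) := by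
        rw [inv_mul_cancel₀ hk, map_one, one_mul]
    _ = _ := by simp only [k, map_mul, map_pow]; ring

theorem eq_zero_of_pow_dirDeriv_sum_eq_zero {r n k : ℕ} {p q : ℂ} {lam α β : Fin r → ℂ}
    (hk : k ≠ 0) (hr : r ≤ n + 1) (hpair : Pairwise fun i j => α i * β j - α j * β i ≠ 0)
    (h : ((dirDeriv p q : Module.End ℂ (MvPolynomial (Fin 2) ℂ)) ^ k)
      (∑ j, C (lam j) * lform (α j) (β j) ^ (n + k)) = 0)
    {j : Fin r} (hj : α j * p + β j * q ≠ 0) : lam j = 0 := by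
  rw [pow_dirDeriv_sum, ← sum_filter_of_ne (p := fun j => α j * p + β j * q ≠ 0) fun i _ hi => by
    by_contra! h0; exact hi (by simp [h0, hk])] at h
  have hμ := eq_zero_of_sum_C_mul_lform_pow_eq_zero
    (s := univ.filter fun j => α j * p + β j * q ≠ 0)
    ((card_filter_le _ _).trans (by simpa))
    (fun i hi h0 => (mem_filter.1 hi).2 (by simpa [eval_lform] using congrArg (eval ![p, q]) h0))
    (hpair.set_pairwise _) h j (mem_filter.2 ⟨mem_univ j, hj⟩)
  have hdesc : ((n + k).descFactorial k : ℂ) ≠ 0 := by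
    exact_mod_cast (Nat.descFactorial_pos.2 (by omega)).ne'
  simpa [hdesc, hj] using hμ

section NearPower

variable {a b : Fin 3 → ℂ} (m : ℕ)

theorem dirDeriv_near_power :
    dirDeriv (b 0) (-a 0)
        (lform (a 0) (b 0) ^ (m + 1) * lform (a 1) (b 1) * lform (a 2) (b 2)) =
      lform (a 0) (b 0) ^ (m + 1) * (C (a 1 * b 0 + b 1 * -a 0) * lform (a 2) (b 2) +
        C (a 2 * b 0 + b 2 * -a 0) * lform (a 1) (b 1)) := by
  rw [mul_assoc, Derivation.map_pow_mul_of_map_eq_zero _ (dirDeriv_lform_self _ _),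
    Derivation.leibniz, dirDeriv_lform, dirDeriv_lform, smul_eq_mul, smul_eq_mul]
  ring

theorem pow_three_dirDeriv_near_power :
    ((dirDeriv (b 0) (-a 0) : Module.End ℂ (MvPolynomial (Fin 2) ℂ)) ^ 3)
      (lform (a 0) (b 0) ^ (m + 1) * lform (a 1) (b 1) * lform (a 2) (b 2)) = 0 := by
  have hu := dirDeriv_lform_self (a 0) (b 0)
  simp only [Module.End.pow_apply, Function.iterate_succ_apply', Function.iterate_zero_apply,
    Derivation.coeFn_coe]
  rw [dirDeriv_near_power, Derivation.map_pow_mul_of_map_eq_zero _ hu,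
    Derivation.map_pow_mul_of_map_eq_zero _ hu, map_add, dirDeriv_C_mul, dirDeriv_C_mul,
    dirDeriv_lform, dirDeriv_lform, ← map_mul, ← map_mul, ← map_add, dirDeriv_C, mul_zero]

theorem dirDeriv_near_power_ne_zero (hdist : ∀ i j, i ≠ j → a i * b j - a j * b i ≠ 0) :
    dirDeriv (b 0) (-a 0)
      (lform (a 0) (b 0) ^ (m + 1) * lform (a 1) (b 1) * lform (a 2) (b 2)) ≠ 0 := by
  intro h
  -- evaluate at the zero `(b₁, -a₁)` of `ℓ₁`
  have := congrArg (eval ![b 1, -a 1]) h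
  simp only [dirDeriv_near_power, map_mul, map_pow, map_add, eval_C, eval_lform] at this
  simp only [Fin.isValue, Matrix.cons_val_zero, Matrix.cons_val_one, map_zero, mul_eq_zero,
    pow_eq_zero_iff', ne_eq] at this
  rcases this with ⟨h, -⟩ | h
  · exact hdist 0 1 (by decide) (by linear_combination h)
  · rcases mul_eq_zero.1 (show (a 1 * b 0 - a 0 * b 1) * (a 2 * b 1 - a 1 * b 2) = 0 by
      linear_combination h) with h | h
    · exact hdist 1 0 (by decide) h
    · exact hdist 2 1 (by decide) h

end NearPower

theorem le_card_of_near_power_eq_sum {d r : ℕ} (hd : 3 ≤ d) {a b : Fin 3 → ℂ}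
    (hdist : ∀ i j, i ≠ j → a i * b j - a j * b i ≠ 0) {lam α β : Fin r → ℂ}
    (hpair : Pairwise fun i j => α i * β j - α j * β i ≠ 0)
    (hf : lform (a 0) (b 0) ^ (d - 2) * lform (a 1) (b 1) * lform (a 2) (b 2) =
      ∑ j, C (lam j) * lform (α j) (β j) ^ d) : d - 1 ≤ r := by
  obtain ⟨m, rfl⟩ : ∃ m, d = m + 3 := ⟨d - 3, by omega⟩
  rw [show m + 3 - 2 = m + 1 by omega] at hf
  by_contra! hr
  have h3 := pow_three_dirDeriv_near_power (a := a) (b := b) m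
  rw [hf] at h3
  have hlam := fun j =>
    eq_zero_of_pow_dirDeriv_sum_eq_zero (j := j) three_ne_zero (by omega) hpair h3
  apply dirDeriv_near_power_ne_zero m hdist
  have h1 := pow_dirDeriv_sum univ lam α β (b 0) (-a 0) (m + 2) 1
  rw [pow_one, Derivation.coeFn_coe] at h1
  rw [hf, h1]
  refine sum_eq_zero fun j _ => ?_
  by_cases hj : α j * b 0 + β j * -a 0 = 0
  · rw [hj]; simp
  · rw [hlam j hj]; simp

/-- `L_ℂ(ℓ₀^(d-2) ℓ₁ ℓ₂) = d - 1` for pairwise nonproportional linear forms. -/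
theorem rank_of_near_power (d : ℕ) (hd : 3 ≤ d) (a b : Fin 3 → ℂ)
    (hdist : ∀ i j, i ≠ j → a i * b j - a j * b i ≠ 0)
    (f : MvPolynomial (Fin 2) ℂ)
    (hf : f = lform (a 0) (b 0) ^ (d - 2) * lform (a 1) (b 1) * lform (a 2) (b 2)) :
    rankC d f = d - 1 := by
  subst hf
  obtain ⟨lam, α, β, hrep⟩ := exists_near_power_eq_sum hd hdist
  refine le_antisymm (Nat.sInf_le ⟨lam, α, β, hrep⟩) ?_
  obtain ⟨lam', α', β', hrep', hpair⟩ := exists_rankC_sum_pairwise ⟨lam, α, β, hrep⟩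
  exact le_card_of_near_power_eq_sum hd hdist hpair hrep'
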